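/- arXiv:1303.3173 — 3 statements merged into one kernel-verified Lean document; each statement's English description precedes it below -/
import Mathlib

section
/- Let R be a commutative local ring and let s ∈ J(R). The following are equivalent: (1) K_s(R) is a quasipolar ring; (2) for all u, v ∈ U(R) and w ∈ J(R), the equation t² − (u+w)t + (uw − sv) = 0 has a solution in R; (3) for all u ∈ U(R) and w ∈ J(R), the equation t² − (1+w)t + (w − su) = 0 has a solution in R; (4) the matrix [[1,1],[u,w]] is quasipolar in K_s(R) for all u ∈ U(R) and w ∈ J(R). -/
/-- The generalized matrix ring `K_s(R)` with multiplier `s`. -/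
@[ext]
structure GenMatrix (R : Type*) (s : R) where
  a : R
  b : R
  c : R
  d : R

namespace GenMatrix

variable {R : Type*} [Ring R] {s : R}

instance : Add (GenMatrix R s) :=
  ⟨fun X Y => ⟨X.a + Y.a, X.b + Y.b, X.c + Y.c, X.d + Y.d⟩⟩
instance : Neg (GenMatrix R s) := ⟨fun X => ⟨-X.a, -X.b, -X.c, -X.d⟩⟩
instance : Zero (GenMatrix R s) := ⟨⟨0, 0, 0, 0⟩⟩
instance : One (GenMatrix R s) := ⟨⟨1, 0, 0, 1⟩⟩
instance : Mul (GenMatrix R s) :=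
  ⟨fun X Y => ⟨X.a * Y.a + s * (X.b * Y.c), X.a * Y.b + X.b * Y.d,
    X.c * Y.a + X.d * Y.c, s * (X.c * Y.b) + X.d * Y.d⟩⟩

@[simp] lemma add_a (X Y : GenMatrix R s) : (X + Y).a = X.a + Y.a := rfl
@[simp] lemma add_b (X Y : GenMatrix R s) : (X + Y).b = X.b + Y.b := rfl
@[simp] lemma add_c (X Y : GenMatrix R s) : (X + Y).c = X.c + Y.c := rfl
@[simp] lemma add_d (X Y : GenMatrix R s) : (X + Y).d = X.d + Y.d := rfl
@[simp] lemma neg_a (X : GenMatrix R s) : (-X).a = -X.a := rfl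
@[simp] lemma neg_b (X : GenMatrix R s) : (-X).b = -X.b := rfl
@[simp] lemma neg_c (X : GenMatrix R s) : (-X).c = -X.c := rfl
@[simp] lemma neg_d (X : GenMatrix R s) : (-X).d = -X.d := rfl
@[simp] lemma zero_a : (0 : GenMatrix R s).a = 0 := rfl
@[simp] lemma zero_b : (0 : GenMatrix R s).b = 0 := rfl
@[simp] lemma zero_c : (0 : GenMatrix R s).c = 0 := rfl
@[simp] lemma zero_d : (0 : GenMatrix R s).d = 0 := rfl
@[simp] lemma one_a : (1 : GenMatrix R s).a = 1 := rfl
@[simp] lemma one_b : (1 : GenMatrix R s).b = 0 := rfl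
@[simp] lemma one_c : (1 : GenMatrix R s).c = 0 := rfl
@[simp] lemma one_d : (1 : GenMatrix R s).d = 1 := rfl
@[simp] lemma mul_a (X Y : GenMatrix R s) : (X * Y).a = X.a * Y.a + s * (X.b * Y.c) := rfl
@[simp] lemma mul_b (X Y : GenMatrix R s) : (X * Y).b = X.a * Y.b + X.b * Y.d := rfl
@[simp] lemma mul_c (X Y : GenMatrix R s) : (X * Y).c = X.c * Y.a + X.d * Y.c := rfl
@[simp] lemma mul_d (X Y : GenMatrix R s) : (X * Y).d = s * (X.c * Y.b) + X.d * Y.d := rfl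

instance : AddCommGroup (GenMatrix R s) where
  add_assoc X Y Z := by ext <;> simp [add_assoc]
  zero_add X := by ext <;> simp
  add_zero X := by ext <;> simp
  add_comm X Y := by ext <;> simp [add_comm]
  neg_add_cancel X := by ext <;> simp
  nsmul := nsmulRec
  zsmul := zsmulRec

section Central

variable [Fact (s ∈ Set.center R)]

lemma scomm (r : R) : r * s = s * r := Semigroup.mem_center_iff.mp Fact.out r

lemma sshift (r t : R) : r * (s * t) = s * (r * t) := by
  rw [← mul_assoc, scomm (s := s), mul_assoc]

instance : Ring (GenMatrix R s) where
  __ := (inferInstance : AddCommGroup (GenMatrix R s))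
  left_distrib X Y Z := by ext <;> simp [mul_add, add_mul] <;> abel
  right_distrib X Y Z := by ext <;> simp [mul_add, add_mul] <;> abel
  zero_mul X := by ext <;> simp
  mul_zero X := by ext <;> simp
  mul_assoc X Y Z := by
    ext <;> simp only [mul_a, mul_b, mul_c, mul_d, mul_add, add_mul, mul_assoc, sshift] <;> abel
  one_mul X := by ext <;> simp
  mul_one X := by ext <;> simp

end Central

instance central_of_comm {R : Type*} [CommRing R] (s : R) : Fact (s ∈ Set.center R) :=
  ⟨by rw [Set.center_eq_univ]; trivial⟩

/-- `det_s` of a generalized matrix over a commutative ring. -/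
def dets {R : Type*} {s : R} [CommRing R] (A : GenMatrix R s) : R :=
  A.a * A.d - s * (A.b * A.c)

/-- The trace of a generalized matrix. -/
def tr {R : Type*} {s : R} [Ring R] (A : GenMatrix R s) : R := A.a + A.d

end GenMatrix

/-- An element `a` is quasinilpotent if `1 + a*x` is a unit for every `x` commuting with `a`. -/
def IsQuasinilpotent {R : Type*} [Ring R] (a : R) : Prop :=
  ∀ x : R, a * x = x * a → IsUnit (1 + a * x)

/-- An element `a` is quasipolar if there is an idempotent `p` in the double commutant of `a`
with `a + p` a unit and `a * p` quasinilpotent. -/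
def IsQuasipolar {R : Type*} [Ring R] (a : R) : Prop :=
  ∃ p : R, IsIdempotentElem p ∧ (∀ y : R, y * a = a * y → p * y = y * p) ∧
    IsUnit (a + p) ∧ IsQuasinilpotent (a * p)

/-- A ring is quasipolar if every element is quasipolar. -/
def IsQuasipolarRing (R : Type*) [Ring R] : Prop := ∀ a : R, IsQuasipolar a

/-- An element is strongly clean if it is the sum of an idempotent and a unit that commute. -/
def IsStronglyClean {R : Type*} [Ring R] (a : R) : Prop :=
  ∃ e u : R, IsIdempotentElem e ∧ IsUnit u ∧ a = e + u ∧ e * u = u * e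

/-- A ring is strongly clean if every element is strongly clean. -/
def IsStronglyCleanRing (R : Type*) [Ring R] : Prop := ∀ a : R, IsStronglyClean a

/-- `a` is similar to `b` if `b = u⁻¹ * a * u` for some unit `u`. -/
def IsSimilar {R : Type*} [Ring R] (a b : R) : Prop :=
  ∃ u : Rˣ, b = ↑u⁻¹ * a * ↑u

/-- The Jacobson radical of a ring: the intersection of all maximal left ideals. -/
def JacobsonRadical (R : Type*) [Ring R] : Ideal R := Ideal.jacobson ⊥


/-!
Over a local ring with `s ∈ 𝔪`, a generalized matrix `A` is a unit iff `A.a * A.d` is, so the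
diagonal decides almost everything: if both diagonal entries are units take `p = 0`, if both lie
in `𝔪` take `p = 1`. In the mixed case `tr A` is a unit and `dets A ∈ 𝔪`, and what is needed is a
root of `t² - tr A * t + dets A`: it splits the polynomial into roots `α ∈ 𝔪` and `β` a unit, and
`(β - A) / (β - α)` is the idempotent. Conversely, the idempotent of `⟨1, 1, u, w⟩` can be neither
`0` nor `1`, so its `b`-entry is a unit and its image is an eigenline, which yields a root.
Condition (2) covers every mixed characteristic polynomial after shifting `u` and `w` by `s`, and
(3) gives (2) after scaling `t` by `u`.
-/

open IsLocalRing

lemma jacobsonRadical_eq_maximalIdeal (R : Type*) [CommRing R] [IsLocalRing R] :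
    JacobsonRadical R = maximalIdeal R :=
  jacobson_eq_maximalIdeal ⊥ bot_ne_top

lemma IsQuasinilpotent.isUnit_one_sub {S : Type*} [Ring S] {a : S} (h : IsQuasinilpotent a) :
    IsUnit (1 - a) := by
  simpa [sub_eq_add_neg] using h (-1) (by simp)

lemma exists_root_of_forall_exists_root_one {R : Type*} [CommRing R] {s : R} {I : Ideal R}
    (h : ∀ u w : R, IsUnit u → w ∈ I → ∃ t : R, t ^ 2 - (1 + w) * t + (w - s * u) = 0)
    {u v w : R} (hu : IsUnit u) (hv : IsUnit v) (hw : w ∈ I) :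
    ∃ t : R, t ^ 2 - (u + w) * t + (u * w - s * v) = 0 := by
  obtain ⟨i, hi⟩ := hu.exists_right_inv
  obtain ⟨r, hr⟩ := h (v * i ^ 2) (w * i) (hv.mul ((IsUnit.of_mul_eq_one_right u hi).pow 2))
    (I.mul_mem_right _ hw)
  exact ⟨u * r, by
    linear_combination u ^ 2 * hr + (u * w * r - u * w + s * v * (u * i + 1)) * hi⟩

section LocalRing

variable {R : Type*} [CommRing R] [IsLocalRing R]

lemma isUnit_add_of_mem_maximalIdeal {u j : R} (hu : IsUnit u) (hj : j ∈ maximalIdeal R) :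
    IsUnit (u + j) := by
  by_contra h
  have hu' : u + j - j ∈ maximalIdeal R := sub_mem ((mem_maximalIdeal _).mpr h) hj
  exact notMem_maximalIdeal.mpr hu (by simpa using hu')

lemma isUnit_sub_of_mem_maximalIdeal {u j : R} (hu : IsUnit u) (hj : j ∈ maximalIdeal R) :
    IsUnit (u - j) := by
  simpa [sub_eq_add_neg] using isUnit_add_of_mem_maximalIdeal hu (neg_mem hj)

lemma exists_roots_mem_maximalIdeal_isUnit {τ δ t : R} (hτ : IsUnit τ)
    (hδ : δ ∈ maximalIdeal R) (ht : t ^ 2 - τ * t + δ = 0) :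
    ∃ α β : R, α ∈ maximalIdeal R ∧ IsUnit β ∧ α + β = τ ∧ α * β = δ := by
  by_cases htm : t ∈ maximalIdeal R
  · exact ⟨t, τ - t, htm, isUnit_sub_of_mem_maximalIdeal hτ htm, by ring,
      by linear_combination -ht⟩
  · obtain ⟨e, he⟩ := (notMem_maximalIdeal.mp htm).exists_right_inv
    have hα : τ - t = δ * e := by linear_combination (-e) * ht - (τ - t) * he
    exact ⟨τ - t, t, hα ▸ Ideal.mul_mem_right _ _ hδ, notMem_maximalIdeal.mp htm, by ring,
      by linear_combination -ht⟩

lemma exists_root_of_forall_exists_root {s : R} (hs : s ∈ maximalIdeal R)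
    (h : ∀ u v w : R, IsUnit u → IsUnit v → w ∈ maximalIdeal R →
      ∃ t : R, t ^ 2 - (u + w) * t + (u * w - s * v) = 0)
    {u w : R} (hu : IsUnit u) (hw : w ∈ maximalIdeal R) (x : R) :
    ∃ t : R, t ^ 2 - (u + w) * t + (u * w - s * x) = 0 := by
  by_cases hx : x ∈ maximalIdeal R
  · -- `u * w - s * x = (u + s) * (w - s) - s * (x + w - u - s)`
    have hv : IsUnit (x + w - u - s) := by
      convert (isUnit_sub_of_mem_maximalIdeal hu (sub_mem (add_mem hx hw) hs)).neg using 1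
      ring
    obtain ⟨t, ht⟩ := h (u + s) (x + w - u - s) (w - s) (isUnit_add_of_mem_maximalIdeal hu hs) hv
      (sub_mem hw hs)
    exact ⟨t, by linear_combination ht⟩
  · exact h u x w hu (notMem_maximalIdeal.mp hx) hw

end LocalRing

namespace GenMatrix

section CommRing

variable {R : Type*} [CommRing R] {s : R}

@[simp] lemma sub_a (X Y : GenMatrix R s) : (X - Y).a = X.a - Y.a := by simp [sub_eq_add_neg]
@[simp] lemma sub_b (X Y : GenMatrix R s) : (X - Y).b = X.b - Y.b := by simp [sub_eq_add_neg]
@[simp] lemma sub_c (X Y : GenMatrix R s) : (X - Y).c = X.c - Y.c := by simp [sub_eq_add_neg]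
@[simp] lemma sub_d (X Y : GenMatrix R s) : (X - Y).d = X.d - Y.d := by simp [sub_eq_add_neg]

lemma dets_one : dets (1 : GenMatrix R s) = 1 := by simp [dets]

lemma dets_mul (X Y : GenMatrix R s) : dets (X * Y) = dets X * dets Y := by
  simp only [dets, mul_a, mul_b, mul_c, mul_d]; ring

lemma isUnit_iff_isUnit_dets {A : GenMatrix R s} : IsUnit A ↔ IsUnit (dets A) := by
  refine ⟨fun h => ?_, fun h => ?_⟩
  · obtain ⟨B, hB, -⟩ := isUnit_iff_exists.mp h
    exact IsUnit.of_mul_eq_one _ (by rw [← dets_mul, hB, dets_one])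
  · obtain ⟨e, he⟩ := h.exists_right_inv
    simp only [dets] at he
    -- the adjugate, scaled by `(dets A)⁻¹`
    refine isUnit_iff_exists.mpr ⟨⟨e * A.d, -(e * A.b), -(e * A.c), e * A.a⟩, ?_, ?_⟩ <;>
      ext <;> simp only [mul_a, mul_b, mul_c, mul_d, one_a, one_b, one_c, one_d] <;>
      first
        | linear_combination he
        | ring

end CommRing

section LocalRing

variable {R : Type*} [CommRing R] [IsLocalRing R] {s : R}

lemma isUnit_of_isUnit_a_of_isUnit_d (hs : s ∈ maximalIdeal R) {A : GenMatrix R s}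
    (ha : IsUnit A.a) (hd : IsUnit A.d) : IsUnit A := by
  rw [isUnit_iff_isUnit_dets, dets]
  exact isUnit_sub_of_mem_maximalIdeal (ha.mul hd) (Ideal.mul_mem_right _ _ hs)

lemma isUnit_one_add_of_mem_maximalIdeal (hs : s ∈ maximalIdeal R) {A : GenMatrix R s}
    (ha : A.a ∈ maximalIdeal R) (hd : A.d ∈ maximalIdeal R) : IsUnit (1 + A) := by
  rw [isUnit_iff_isUnit_dets]
  have h : dets (1 + A) = 1 + (A.a + A.d + A.a * A.d - s * (A.b * A.c)) := by
    simp only [dets, add_a, add_b, add_c, add_d, one_a, one_b, one_c, one_d]; ring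
  rw [h]
  exact isUnit_add_of_mem_maximalIdeal isUnit_one <| sub_mem
    (add_mem (add_mem ha hd) (Ideal.mul_mem_right _ _ ha)) (Ideal.mul_mem_right _ _ hs)

lemma isQuasinilpotent_of_mem_maximalIdeal (hs : s ∈ maximalIdeal R) {A : GenMatrix R s}
    (ha : A.a ∈ maximalIdeal R) (hd : A.d ∈ maximalIdeal R) : IsQuasinilpotent A :=
  fun _ _ => isUnit_one_add_of_mem_maximalIdeal hs
    (add_mem (Ideal.mul_mem_right _ _ ha) (Ideal.mul_mem_right _ _ hs))
    (add_mem (Ideal.mul_mem_right _ _ hs) (Ideal.mul_mem_right _ _ hd))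

lemma eq_zero_of_isIdempotentElem_of_mem_maximalIdeal (hs : s ∈ maximalIdeal R)
    {p : GenMatrix R s} (hp : IsIdempotentElem p) (ha : p.a ∈ maximalIdeal R)
    (hd : p.d ∈ maximalIdeal R) : p = 0 := by
  have hu : IsUnit (1 - p) := by
    simpa [sub_eq_add_neg] using
      isUnit_one_add_of_mem_maximalIdeal hs (A := -p) (by simpa using ha) (by simpa using hd)
  have h : p * (1 - p) = 0 := by rw [mul_sub, mul_one, hp.eq, sub_self]
  exact (hu.mul_left_eq_zero).mp h

lemma eq_zero_or_eq_one_of_isIdempotentElem (hs : s ∈ maximalIdeal R) {p : GenMatrix R s}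
    (hp : IsIdempotentElem p) (had : p.a - p.d ∈ maximalIdeal R) : p = 0 ∨ p = 1 := by
  have hpa : p.a * (p.a - 1) ∈ maximalIdeal R := by
    have hidem : p.a * p.a + s * (p.b * p.c) = p.a := congrArg a hp.eq
    have h : p.a * (p.a - 1) = -(s * (p.b * p.c)) := by linear_combination hidem
    rw [h]
    exact neg_mem (Ideal.mul_mem_right _ _ hs)
  rcases (maximalIdeal.isMaximal R).isPrime.mem_or_mem hpa with ha | ha
  · left
    refine eq_zero_of_isIdempotentElem_of_mem_maximalIdeal hs hp ha ?_
    simpa using sub_mem ha had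
  · right
    have hd : p.d - 1 ∈ maximalIdeal R := by simpa using sub_mem ha had
    refine (sub_eq_zero.mp
      (eq_zero_of_isIdempotentElem_of_mem_maximalIdeal hs hp.one_sub ?_ ?_)).symm
    · simpa using neg_mem ha
    · simpa using neg_mem hd

lemma isQuasipolar_of_isUnit_a_of_isUnit_d (hs : s ∈ maximalIdeal R) {A : GenMatrix R s}
    (ha : IsUnit A.a) (hd : IsUnit A.d) : IsQuasipolar A :=
  ⟨0, .zero, fun _ _ => by simp, by simpa using isUnit_of_isUnit_a_of_isUnit_d hs ha hd,
    fun _ _ => by simp⟩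

lemma isQuasipolar_of_mem_maximalIdeal (hs : s ∈ maximalIdeal R) {A : GenMatrix R s}
    (ha : A.a ∈ maximalIdeal R) (hd : A.d ∈ maximalIdeal R) : IsQuasipolar A :=
  ⟨1, .one, fun _ _ => by simp,
    by simpa [add_comm] using isUnit_one_add_of_mem_maximalIdeal hs ha hd,
    by simpa using isQuasinilpotent_of_mem_maximalIdeal hs ha hd⟩

lemma isQuasipolar_of_roots (hs : s ∈ maximalIdeal R) {A : GenMatrix R s} {α β : R}
    (hα : α ∈ maximalIdeal R) (hβ : IsUnit β) (hsum : α + β = tr A) (hprod : α * β = dets A) :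
    IsQuasipolar A := by
  rw [tr] at hsum
  rw [dets] at hprod
  obtain ⟨γ, hγ⟩ := (isUnit_sub_of_mem_maximalIdeal hβ hα).exists_right_inv
  -- `p = (β - A) / (β - α)`: by Cayley–Hamilton, `A` acts on the image of `p` as `α` and on
  -- the image of `1 - p` as `β`
  set p : GenMatrix R s := ⟨γ * (β - A.a), -(γ * A.b), -(γ * A.c), γ * (β - A.d)⟩ with hp
  have hAp : A * p = ⟨α * p.a, α * p.b, α * p.c, α * p.d⟩ := by
    ext <;> simp only [hp, mul_a, mul_b, mul_c, mul_d]
    · linear_combination (γ * A.a) * hsum - γ * hprod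
    · linear_combination (γ * A.b) * hsum
    · linear_combination (γ * A.c) * hsum
    · linear_combination (γ * A.d) * hsum - γ * hprod
  refine ⟨p, ?_, fun Y hY => ?_, ?_, ?_⟩
  · show p * p = p
    ext <;> simp only [hp, mul_a, mul_b, mul_c, mul_d]
    · linear_combination (γ * (β - A.a)) * hγ - (γ ^ 2 * A.a) * hsum + γ ^ 2 * hprod
    · linear_combination (-(γ * A.b)) * hγ - (γ ^ 2 * A.b) * hsum
    · linear_combination (-(γ * A.c)) * hγ - (γ ^ 2 * A.c) * hsum
    · linear_combination (γ * (β - A.d)) * hγ - (γ ^ 2 * A.d) * hsum + γ ^ 2 * hprod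
  · have ha : Y.a * A.a + s * (Y.b * A.c) = A.a * Y.a + s * (A.b * Y.c) := congrArg a hY
    have hb : Y.a * A.b + Y.b * A.d = A.a * Y.b + A.b * Y.d := congrArg b hY
    have hc : Y.c * A.a + Y.d * A.c = A.c * Y.a + A.d * Y.c := congrArg c hY
    have hd : s * (Y.c * A.b) + Y.d * A.d = s * (A.c * Y.b) + A.d * Y.d := congrArg d hY
    ext <;> simp only [hp, mul_a, mul_b, mul_c, mul_d]
    · linear_combination γ * ha
    · linear_combination γ * hb
    · linear_combination γ * hc
    · linear_combination γ * hd
  · have h : dets (A + p) = β * (1 + α) := by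
      simp only [dets, hp, add_a, add_b, add_c, add_d]
      linear_combination -(1 - γ) ^ 2 * hprod - ((1 - γ) * γ * β) * hsum + β * hγ
    rw [isUnit_iff_isUnit_dets, h]
    exact hβ.mul (isUnit_add_of_mem_maximalIdeal isUnit_one hα)
  · rw [hAp]
    exact isQuasinilpotent_of_mem_maximalIdeal hs (Ideal.mul_mem_right _ _ hα)
      (Ideal.mul_mem_right _ _ hα)

lemma isQuasipolar_of_root (hs : s ∈ maximalIdeal R) {A : GenMatrix R s} {t : R}
    (hτ : IsUnit (tr A)) (hδ : dets A ∈ maximalIdeal R) (ht : t ^ 2 - tr A * t + dets A = 0) :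
    IsQuasipolar A := by
  obtain ⟨α, β, hα, hβ, hsum, hprod⟩ := exists_roots_mem_maximalIdeal_isUnit hτ hδ ht
  exact isQuasipolar_of_roots hs hα hβ hsum hprod

lemma isQuasipolarRing_of_forall_exists_root (hs : s ∈ maximalIdeal R)
    (h : ∀ u v w : R, IsUnit u → IsUnit v → w ∈ maximalIdeal R →
      ∃ t : R, t ^ 2 - (u + w) * t + (u * w - s * v) = 0) :
    IsQuasipolarRing (GenMatrix R s) := by
  intro A
  by_cases ha : A.a ∈ maximalIdeal R <;> by_cases hd : A.d ∈ maximalIdeal R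
  · exact isQuasipolar_of_mem_maximalIdeal hs ha hd
  · have hd := notMem_maximalIdeal.mp hd
    obtain ⟨t, ht⟩ := exists_root_of_forall_exists_root hs h hd ha (A.b * A.c)
    refine isQuasipolar_of_root hs (t := t) ?_ ?_ (by rw [tr, dets]; linear_combination ht)
    · rw [tr, add_comm]
      exact isUnit_add_of_mem_maximalIdeal hd ha
    · exact sub_mem (Ideal.mul_mem_right _ _ ha) (Ideal.mul_mem_right _ _ hs)
  · have ha := notMem_maximalIdeal.mp ha
    obtain ⟨t, ht⟩ := exists_root_of_forall_exists_root hs h ha hd (A.b * A.c)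
    exact isQuasipolar_of_root hs (isUnit_add_of_mem_maximalIdeal ha hd)
      (sub_mem (Ideal.mul_mem_left _ _ hd) (Ideal.mul_mem_right _ _ hs)) ht
  · exact isQuasipolar_of_isUnit_a_of_isUnit_d hs (notMem_maximalIdeal.mp ha)
      (notMem_maximalIdeal.mp hd)

lemma isUnit_b_of_commute (hs : s ∈ maximalIdeal R) {u w : R} {p : GenMatrix R s}
    (hp : IsIdempotentElem p) (hp0 : p ≠ 0) (hp1 : p ≠ 1)
    (hpA : p * ⟨1, 1, u, w⟩ = ⟨1, 1, u, w⟩ * p) : IsUnit p.b := by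
  have hb : p.a * 1 + p.b * w = 1 * p.b + 1 * p.d := congrArg b hpA
  have had : p.a - p.d = p.b * (1 - w) := by linear_combination hb
  have h : IsUnit (p.a - p.d) := notMem_maximalIdeal.mp fun h =>
    (eq_zero_or_eq_one_of_isIdempotentElem hs hp h).elim hp0 hp1
  exact isUnit_of_mul_isUnit_left (had ▸ h)

lemma exists_root_of_commute {u w : R} (hw : w ∈ maximalIdeal R) {p : GenMatrix R s}
    (hp : IsIdempotentElem p) (hb : IsUnit p.b) (hpA : p * ⟨1, 1, u, w⟩ = ⟨1, 1, u, w⟩ * p) :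
    ∃ t : R, t ^ 2 - (1 + w) * t + (w - s * u) = 0 := by
  have hAb : p.a * 1 + p.b * w = 1 * p.b + 1 * p.d := congrArg b hpA
  have hAc : p.c * 1 + p.d * u = u * p.a + w * p.c := congrArg c hpA
  have hpa : p.a * p.a + s * (p.b * p.c) = p.a := congrArg a hp.eq
  have hpb : p.a * p.b + p.b * p.d = p.b := congrArg b hp.eq
  obtain ⟨iw, hiw⟩ := (isUnit_sub_of_mem_maximalIdeal isUnit_one hw).exists_right_inv
  obtain ⟨e, he⟩ := hb.exists_right_inv
  have hpc : p.c = u * p.b := by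
    linear_combination iw * hAc + (iw * u) * hAb - (p.c - u * p.b) * hiw
  have htr : p.a + p.d = 1 := by linear_combination e * hpb - (p.a + p.d - 1) * he
  -- the eigenvalue of `⟨1, 1, u, w⟩` on the image of `1 - p`
  refine ⟨1 - p.a * e, ?_⟩
  linear_combination (e ^ 2 * p.a) * htr + (e ^ 2 * p.a) * hAb - e ^ 2 * hpa
    + (e ^ 2 * s * p.b) * hpc + (p.a * e - w * p.a * e + s * u * (p.b * e + 1)) * he

lemma exists_root_of_isQuasipolar (hs : s ∈ maximalIdeal R) {u w : R} (hw : w ∈ maximalIdeal R)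
    (h : IsQuasipolar (⟨1, 1, u, w⟩ : GenMatrix R s)) :
    ∃ t : R, t ^ 2 - (1 + w) * t + (w - s * u) = 0 := by
  obtain ⟨p, hp, hcomm, hunit, hqn⟩ := h
  have hp0 : p ≠ 0 := by
    rintro rfl
    rw [add_zero, isUnit_iff_isUnit_dets] at hunit
    have hdets : dets (⟨1, 1, u, w⟩ : GenMatrix R s) = w - s * u := by simp [dets]
    exact notMem_maximalIdeal.mpr hunit (hdets ▸ sub_mem hw (Ideal.mul_mem_right _ _ hs))
  have hp1 : p ≠ 1 := by
    rintro rfl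
    have h1 := (mul_one (⟨1, 1, u, w⟩ : GenMatrix R s) ▸ hqn).isUnit_one_sub
    rw [isUnit_iff_isUnit_dets] at h1
    have hdets : dets (1 - ⟨1, 1, u, w⟩ : GenMatrix R s) = -(s * u) := by simp [dets]
    exact notMem_maximalIdeal.mpr h1 (hdets ▸ neg_mem (Ideal.mul_mem_right _ _ hs))
  exact exists_root_of_commute hw hp (isUnit_b_of_commute hs hp hp0 hp1 (hcomm _ rfl))
    (hcomm _ rfl)

end LocalRing

end GenMatrix

open GenMatrix in
/-- for a commutative local ring `R` and `s ∈ J(R)`, the following are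
equivalent: (1) `K_s(R)` is quasipolar; (2) for all units `u, v` and `w ∈ J(R)` the
equation `t² - (u+w)t + (uw - sv) = 0` is solvable; (3) for all units `u` and `w ∈ J(R)`
the equation `t² - (1+w)t + (w - su) = 0` is solvable; (4) `[[1,1],[u,w]]` is quasipolar
in `K_s(R)` for all units `u` and all `w ∈ J(R)`. -/
theorem genMatrix_isQuasipolarRing_tfae_of_mem_jacobson {R : Type*} [CommRing R]
    [IsLocalRing R] (s : R) (hs : s ∈ JacobsonRadical R) :
    List.TFAE
      [IsQuasipolarRing (GenMatrix R s),
       ∀ u v w : R, IsUnit u → IsUnit v → w ∈ JacobsonRadical R →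
         ∃ t : R, t ^ 2 - (u + w) * t + (u * w - s * v) = 0,
       ∀ u w : R, IsUnit u → w ∈ JacobsonRadical R →
         ∃ t : R, t ^ 2 - (1 + w) * t + (w - s * u) = 0,
       ∀ u w : R, IsUnit u → w ∈ JacobsonRadical R →
         IsQuasipolar (⟨1, 1, u, w⟩ : GenMatrix R s)] := by
  rw [jacobsonRadical_eq_maximalIdeal] at hs ⊢
  tfae_have 1 → 4 := fun h _ _ _ _ => h _
  tfae_have 4 → 3 := fun h u w hu hw => exists_root_of_isQuasipolar hs hw (h u w hu hw)
  tfae_have 3 → 2 := fun h _ _ _ hu hv hw => exists_root_of_forall_exists_root_one h hu hv hw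
  tfae_have 2 → 1 := isQuasipolarRing_of_forall_exists_root hs
  tfae_finish
end

section
/- Let R be a commutative local ring, let s = Σ_{i≥0} s_i x^i ∈ R[[x]], and let A(x) ∈ K_s(R[[x]]); write A(0) ∈ K_{s₀}(R) for the matrix of constant terms of the entries of A(x). Then the equation t² − tr(A(0))t + det_{s₀}(A(0)) = 0 has a root in J(R) and a root in U(R) if and only if the equation t² − tr(A(x))t + det_s(A(x)) = 0 has a root in J(R[[x]]) and a root in U(R[[x]]). -/
/-! Both quadratics only see `T = tr A` and `D = det_s A`, and reduction modulo `x` turns the one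
over `R⟦x⟧` into the one over `R`, so roots descend. Conversely, roots `α ∈ J(R)` and
`β ∈ U(R)` of the reduced quadratic differ by a unit, hence `α + β = T(0)` and `α` is a simple
root (the derivative there is `α - β`). Hensel's lemma in the `x`-adically complete ring `R⟦x⟧`
lifts `α` to a root `a` with constant term `α`, so `a ∈ J(R⟦x⟧)`, and the other root `T - a`
has constant term `β`, so it is a unit. -/

open PowerSeries

section

variable {R : Type*} [CommRing R]

theorem IsUnit.sub_mem_jacobson_bot {u j : R} (hu : IsUnit u) (hj : j ∈ (⊥ : Ideal R).jacobson) :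
    IsUnit (u - j) := by
  obtain ⟨v, rfl⟩ := hu
  have hfactor : (v : R) - j = v * (j * -↑v⁻¹ + 1) := by linear_combination j * v.mul_inv
  exact hfactor ▸ v.isUnit.mul (Ideal.mem_jacobson_bot.mp hj _)

theorem add_eq_of_isUnit_sub_of_quadratic_roots {T D α β : R}
    (hα : α ^ 2 - T * α + D = 0) (hβ : β ^ 2 - T * β + D = 0) (hαβ : IsUnit (α - β)) :
    α + β = T := by
  have h : (α - β) * (α + β - T) = 0 := by linear_combination hα - hβ
  exact sub_eq_zero.mp (hαβ.mul_right_eq_zero.mp h)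

theorem PowerSeries.mem_jacobson_bot_iff {a : R⟦X⟧} :
    a ∈ (⊥ : Ideal R⟦X⟧).jacobson ↔ constantCoeff a ∈ (⊥ : Ideal R).jacobson := by
  simp only [Ideal.mem_jacobson_bot]
  constructor
  · intro h y
    simpa using (h (C y)).map constantCoeff
  · intro h y
    simpa [isUnit_iff_constantCoeff] using h (constantCoeff y)

theorem PowerSeries.exists_isRoot_lift_of_isUnit_derivative {f : Polynomial R⟦X⟧} (hf : f.Monic)
    {α : R} (hroot : (f.map constantCoeff).IsRoot α)
    (hsimple : IsUnit ((f.map constantCoeff).derivative.eval α)) :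
    ∃ a : R⟦X⟧, f.IsRoot a ∧ constantCoeff a = α := by
  have hcoeff (g : Polynomial R⟦X⟧) :
      constantCoeff (g.eval (C α)) = (g.map constantCoeff).eval α := by
    rw [← Polynomial.eval_map_apply, constantCoeff_C]
  -- `R⟦X⟧` is Henselian along `(X)` because it is `X`-adically complete.
  obtain ⟨a, ha, hsub⟩ := HenselianRing.is_henselian (I := Ideal.span {X}) f hf (C α)
    (by rw [Ideal.mem_span_singleton, X_dvd_iff, hcoeff]; exact hroot)
    ((isUnit_iff_constantCoeff.mpr (by rwa [hcoeff, ← Polynomial.derivative_map])).map _)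
  refine ⟨a, ha, ?_⟩
  rwa [Ideal.mem_span_singleton, X_dvd_iff, map_sub, constantCoeff_C, sub_eq_zero] at hsub

theorem PowerSeries.exists_quadratic_root_lift {T D : R⟦X⟧} {α β : R}
    (hα : α ^ 2 - constantCoeff T * α + constantCoeff D = 0)
    (hβ : β ^ 2 - constantCoeff T * β + constantCoeff D = 0) (hαβ : IsUnit (α - β)) :
    ∃ a : R⟦X⟧, a ^ 2 - T * a + D = 0 ∧ constantCoeff a = α := by
  let f : Polynomial R⟦X⟧ := Polynomial.X ^ 2 - Polynomial.C T * Polynomial.X + Polynomial.C D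
  have hmonic : f.Monic := by dsimp only [f]; monicity!
  have hderiv : (f.map constantCoeff).derivative.eval α = α - β := by
    have hsum := add_eq_of_isUnit_sub_of_quadratic_roots hα hβ hαβ
    simp [f, ← hsum, one_add_one_eq_two, two_mul]
  obtain ⟨a, ha, ha0⟩ := exists_isRoot_lift_of_isUnit_derivative hmonic (by simpa [f] using hα) (hderiv ▸ hαβ)
  exact ⟨a, by simpa [f] using ha, ha0⟩

def HasRadicalAndUnitRoots (T D : R) : Prop :=
  (∃ α ∈ JacobsonRadical R, α ^ 2 - T * α + D = 0) ∧ ∃ β : R, IsUnit β ∧ β ^ 2 - T * β + D = 0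

theorem HasRadicalAndUnitRoots.of_constantCoeff {T D : R⟦X⟧}
    (h : HasRadicalAndUnitRoots (constantCoeff T) (constantCoeff D)) :
    HasRadicalAndUnitRoots T D := by
  obtain ⟨⟨α, hαJ, hα⟩, β, hβU, hβ⟩ := h
  have hαβ : IsUnit (α - β) := by simpa using (hβU.sub_mem_jacobson_bot hαJ).neg
  obtain ⟨a, ha, ha0⟩ := exists_quadratic_root_lift hα hβ hαβ
  have hsum := add_eq_of_isUnit_sub_of_quadratic_roots hα hβ hαβ
  refine ⟨⟨a, mem_jacobson_bot_iff.mpr (ha0 ▸ hαJ), ha⟩, T - a, ?_, by linear_combination ha⟩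
  rw [isUnit_iff_constantCoeff, map_sub, ha0, ← hsum, add_sub_cancel_left]
  exact hβU

theorem HasRadicalAndUnitRoots.map_constantCoeff {T D : R⟦X⟧} (h : HasRadicalAndUnitRoots T D) :
    HasRadicalAndUnitRoots (constantCoeff T) (constantCoeff D) := by
  obtain ⟨⟨α, hαJ, hα⟩, β, hβU, hβ⟩ := h
  refine ⟨⟨constantCoeff α, mem_jacobson_bot_iff.mp hαJ, ?_⟩, constantCoeff β, hβU.map _, ?_⟩
  · simpa using congrArg constantCoeff hα
  · simpa using congrArg constantCoeff hβ

theorem PowerSeries.hasRadicalAndUnitRoots_constantCoeff_iff {T D : R⟦X⟧} :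
    HasRadicalAndUnitRoots (constantCoeff T) (constantCoeff D) ↔ HasRadicalAndUnitRoots T D :=
  ⟨.of_constantCoeff, .map_constantCoeff⟩

end

theorem genMatrix_powerSeries_root_iff_general {R : Type*} [CommRing R]
    (s : PowerSeries R) (A : GenMatrix (PowerSeries R) s)
    (A0 : GenMatrix R (PowerSeries.constantCoeff (R := R) s))
    (hA0 : A0 = ⟨PowerSeries.constantCoeff (R := R) A.a, PowerSeries.constantCoeff (R := R) A.b,
      PowerSeries.constantCoeff (R := R) A.c, PowerSeries.constantCoeff (R := R) A.d⟩) :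
    ((∃ α ∈ JacobsonRadical R, α ^ 2 - GenMatrix.tr A0 * α + GenMatrix.dets A0 = 0) ∧
     (∃ β : R, IsUnit β ∧ β ^ 2 - GenMatrix.tr A0 * β + GenMatrix.dets A0 = 0)) ↔
    ((∃ α ∈ JacobsonRadical (PowerSeries R),
        α ^ 2 - GenMatrix.tr A * α + GenMatrix.dets A = 0) ∧
     (∃ β : PowerSeries R, IsUnit β ∧
        β ^ 2 - GenMatrix.tr A * β + GenMatrix.dets A = 0)) := by
  have htr : GenMatrix.tr A0 = constantCoeff (GenMatrix.tr A) := by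
    simp [hA0, GenMatrix.tr]
  have hdet : GenMatrix.dets A0 = constantCoeff (GenMatrix.dets A) := by
    simp [hA0, GenMatrix.dets]
  rw [htr, hdet]
  exact hasRadicalAndUnitRoots_constantCoeff_iff

/-- for a commutative local ring `R`, `s ∈ R[[x]]` and
`A(x) ∈ K_s(R[[x]])` with constant-term matrix `A(0) ∈ K_{s₀}(R)`, the equation
`t² - tr(A(0))t + det_{s₀}(A(0)) = 0` has a root in `J(R)` and a root in `U(R)` iff
`t² - tr(A(x))t + det_s(A(x)) = 0` has a root in `J(R[[x]])` and a root in `U(R[[x]])`. -/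
theorem genMatrix_powerSeries_root_iff {R : Type*} [CommRing R] [IsLocalRing R]
    (s : PowerSeries R) (A : GenMatrix (PowerSeries R) s)
    (A0 : GenMatrix R (PowerSeries.constantCoeff (R := R) s))
    (hA0 : A0 = ⟨PowerSeries.constantCoeff (R := R) A.a, PowerSeries.constantCoeff (R := R) A.b,
      PowerSeries.constantCoeff (R := R) A.c, PowerSeries.constantCoeff (R := R) A.d⟩) :
    ((∃ α ∈ JacobsonRadical R, α ^ 2 - GenMatrix.tr A0 * α + GenMatrix.dets A0 = 0) ∧
     (∃ β : R, IsUnit β ∧ β ^ 2 - GenMatrix.tr A0 * β + GenMatrix.dets A0 = 0)) ↔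
    ((∃ α ∈ JacobsonRadical (PowerSeries R),
        α ^ 2 - GenMatrix.tr A * α + GenMatrix.dets A = 0) ∧
     (∃ β : PowerSeries R, IsUnit β ∧
        β ^ 2 - GenMatrix.tr A * β + GenMatrix.dets A = 0)) :=
  genMatrix_powerSeries_root_iff_general s A A0 hA0
end

section
/- Let R be a commutative local ring. Then the generalized matrix ring K_0(R) (with multiplier s = 0) is quasipolar. -/
/-!
In `K_0(R)` the diagonal entries are multiplicative and the off-diagonal matrices form a
square-zero ideal, so `A` is a unit iff `A.a` and `A.d` are, and `A` is quasinilpotent as soon as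
neither is. Hence it suffices to find an idempotent `p` in the double commutant of `A` with
`p.a = 0` exactly when `A.a` is a unit, and likewise for `d`. This is `0` or `1` when `A.a` and
`A.d` are both units or both not; otherwise `A.d - A.a` is a unit of the local ring and `p` is the
spectral projection `(A.d - A.a)⁻¹ (A - A.a)` or its complement, a polynomial in `A`.
-/

namespace IsLocalRing

variable {R : Type*} [CommRing R] [IsLocalRing R]

lemma isUnit_mul_add_one_of_not_isUnit {x : R} (hx : ¬IsUnit x) (y : R) :
    IsUnit (x * y + 1) :=
  Ideal.mem_jacobson_bot.1 ((jacobson_eq_maximalIdeal ⊥ bot_ne_top).ge hx) y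

lemma isUnit_sub_of_not_isUnit_iff {x y : R} (h : ¬(IsUnit x ↔ IsUnit y)) : IsUnit (x - y) := by
  by_contra hxy
  refine h ⟨fun hx => ?_, fun hy => ?_⟩ <;> by_contra hne
  · exact (sub_add_cancel x y ▸ (maximalIdeal R).add_mem hxy hne) hx
  · exact (sub_sub_cancel x y ▸ (maximalIdeal R).sub_mem hne hxy) hy

end IsLocalRing

namespace GenMatrix

variable {R : Type*} [CommRing R]

lemma isUnit_iff {A : GenMatrix R 0} : IsUnit A ↔ IsUnit A.a ∧ IsUnit A.d := by
  constructor
  · intro hA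
    obtain ⟨B, hB⟩ := hA.exists_right_inv
    have ha : A.a * B.a = 1 := by simpa using congrArg GenMatrix.a hB
    have hd : A.d * B.d = 1 := by simpa using congrArg GenMatrix.d hB
    exact ⟨.of_mul_eq_one _ ha, .of_mul_eq_one _ hd⟩
  · rintro ⟨ha, hd⟩
    obtain ⟨a', ha'⟩ := ha.exists_left_inv
    obtain ⟨d', hd'⟩ := hd.exists_left_inv
    refine ⟨⟨A, ⟨a', -(a' * A.b * d'), -(d' * A.c * a'), d'⟩, ?_, ?_⟩, rfl⟩ <;>
      ext <;> simp only [mul_a, mul_b, mul_c, mul_d, one_a, one_b, one_c, one_d, zero_mul, add_zero]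
    · linear_combination ha'
    · linear_combination -(A.b * d') * ha'
    · linear_combination -(A.c * a') * hd'
    · linear_combination hd'
    · linear_combination ha'
    · linear_combination -(a' * A.b) * hd'
    · linear_combination -(d' * A.c) * ha'
    · linear_combination hd'

lemma isQuasinilpotent_of_not_isUnit [IsLocalRing R] {A : GenMatrix R 0} (ha : ¬IsUnit A.a)
    (hd : ¬IsUnit A.d) : IsQuasinilpotent A := by
  intro X _
  rw [isUnit_iff]
  constructor
  · simpa [add_comm] using IsLocalRing.isUnit_mul_add_one_of_not_isUnit ha X.a
  · simpa [add_comm] using IsLocalRing.isUnit_mul_add_one_of_not_isUnit hd X.d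

/-- `v (A - A.a)`, for `v = (A.d - A.a)⁻¹`. -/
def spectralIdempotent (A : GenMatrix R 0) (v : R) : GenMatrix R 0 := ⟨0, A.b * v, A.c * v, 1⟩

variable {A : GenMatrix R 0} {v : R}

lemma isIdempotentElem_spectralIdempotent : IsIdempotentElem (spectralIdempotent A v) := by
  ext <;> simp [spectralIdempotent]

lemma spectralIdempotent_mul_comm (hv : v * (A.d - A.a) = 1) {Y : GenMatrix R 0}
    (hY : Y * A = A * Y) : spectralIdempotent A v * Y = Y * spectralIdempotent A v := by
  have hb := congrArg GenMatrix.b hY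
  have hc := congrArg GenMatrix.c hY
  simp only [mul_b, mul_c] at hb hc
  ext <;> simp only [spectralIdempotent, mul_a, mul_b, mul_c, mul_d, zero_mul, mul_zero, add_zero,
    zero_add, one_mul, mul_one]
  · linear_combination (-v) * hb + Y.b * hv
  · linear_combination (-v) * hc - Y.c * hv

open Classical in
lemma isQuasipolar_of_diag [IsLocalRing R] {p : GenMatrix R 0} (hp : IsIdempotentElem p)
    (hcomm : ∀ Y : GenMatrix R 0, Y * A = A * Y → p * Y = Y * p)
    (ha : p.a = if IsUnit A.a then 0 else 1) (hd : p.d = if IsUnit A.d then 0 else 1) :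
    IsQuasipolar A := by
  have diag_entry {x e : R} (he : e = if IsUnit x then 0 else 1) :
      IsUnit (x + e) ∧ ¬IsUnit (x * e) := by
    split_ifs at he with hx <;> subst he
    · simpa using hx
    · simpa [hx] using IsLocalRing.isUnit_mul_add_one_of_not_isUnit hx 1
  obtain ⟨haUnit, haNonunit⟩ := diag_entry ha
  obtain ⟨hdUnit, hdNonunit⟩ := diag_entry hd
  refine ⟨p, hp, hcomm, isUnit_iff.2 ⟨haUnit, hdUnit⟩, isQuasinilpotent_of_not_isUnit ?_ ?_⟩
  · simpa only [mul_a, zero_mul, add_zero]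
  · simpa only [mul_d, zero_mul, zero_add]

end GenMatrix

open GenMatrix IsLocalRing in
/-- for a commutative local ring `R`, the generalized matrix ring `K_0(R)`
is quasipolar. -/
theorem genMatrix_zero_isQuasipolarRing {R : Type*} [CommRing R] [IsLocalRing R] :
    IsQuasipolarRing (GenMatrix R (0 : R)) := by
  intro A
  have spectral (h : ¬(IsUnit A.d ↔ IsUnit A.a)) : ∃ v, v * (A.d - A.a) = 1 :=
    (isUnit_sub_of_not_isUnit_iff h).exists_left_inv
  by_cases ha : IsUnit A.a <;> by_cases hd : IsUnit A.d
  · exact isQuasipolar_of_diag (p := 0) .zero (by simp) (by simp [ha]) (by simp [hd])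
  · obtain ⟨v, hv⟩ := spectral (by tauto)
    exact isQuasipolar_of_diag isIdempotentElem_spectralIdempotent
      (fun Y hY => spectralIdempotent_mul_comm hv hY)
      (by simp [spectralIdempotent, ha]) (by simp [spectralIdempotent, hd])
  · obtain ⟨v, hv⟩ := spectral (by tauto)
    exact isQuasipolar_of_diag isIdempotentElem_spectralIdempotent.one_sub
      (fun Y hY => by rw [sub_mul, mul_sub, one_mul, mul_one, spectralIdempotent_mul_comm hv hY])
      (by simp [spectralIdempotent, sub_eq_add_neg, ha])
      (by simp [spectralIdempotent, sub_eq_add_neg, hd])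
  · exact isQuasipolar_of_diag (p := 1) .one (by simp) (by simp [ha]) (by simp [hd])
end
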